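/- arXiv:2012.07240 — 3 statements merged into one kernel-verified Lean document; each statement's English description precedes it below -/
import Mathlib

section
/- Let 0 < α < 1, let {a_j}_{j∈ℤ} be a sequence of positive reals with ρ ≤ a_{j+1}/a_j ≤ ρ² for some ρ > 1, let {v_j} be a real sequence with |v_j| ≤ V for all j, and let s > 0. Then for any integers m ≤ M, |∑_{j=m}^{M} v_j (a_{j+1}^{2α} e^{-a_{j+1}²/(4s)} - a_j^{2α} e^{-a_j²/(4s)}) / s^{1+α}| ≤ C / a_m², where C depends only on ρ, V, α (not on m, M, s). -/
/-!
With `t = u² / (4s)` one has `u^{2α} e^{-t} / s^{1+α} · u² = (4t)^{1+α} e^{-t}`, and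
`t^p ≤ p^p e^t` (raise `t/p ≤ e^{t/p}` to the power `p`), so every summand is at most
`V (4(1+α))^{1+α} / a_j²`: the difference of two nonnegative numbers below a common bound is
below that bound, and `a_j ≤ a_{j+1}`. Lacunarity gives `a_j ≥ ρ^{j-m} a_m`, so the sum of the
`1 / a_j²` is dominated by a geometric series of ratio `ρ⁻²`.
-/

open Real Finset

theorem rpow_le_mul_exp {p t : ℝ} (hp : 0 < p) (ht : 0 ≤ t) : t ^ p ≤ p ^ p * exp t := by
  have hlin : t / p ≤ exp (t / p) := by linarith [add_one_le_exp (t / p)]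
  calc t ^ p = p ^ p * (t / p) ^ p := by
        rw [div_rpow ht hp.le, mul_div_cancel₀ _ (rpow_pos_of_pos hp p).ne']
    _ ≤ p ^ p * exp (t / p) ^ p := by gcongr
    _ = p ^ p * exp t := by rw [← exp_mul, div_mul_cancel₀ _ hp.ne']

theorem rpow_mul_exp_neg_sq_div_rpow_le {α u s : ℝ} (hα : -1 < α) (hu : 0 < u) (hs : 0 < s) :
    u ^ (2 * α) * exp (-u ^ 2 / (4 * s)) / s ^ (1 + α) ≤ (4 * (1 + α)) ^ (1 + α) / u ^ 2 := by
  set p := 1 + α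
  set t := u ^ 2 / (4 * s)
  have hp : 0 < p := by linarith
  have ht : 0 ≤ t := by positivity
  have hrescale : u ^ (2 * α) * u ^ 2 / s ^ p = 4 ^ p * t ^ p := by
    have h4t : 4 * t = u ^ 2 / s := by simp only [t]; field_simp
    rw [← mul_rpow (by norm_num) ht, h4t, div_rpow (by positivity) hs.le, rpow_mul hu.le, rpow_two,
      show p = α + 1 from add_comm 1 α, rpow_add_one (by positivity : u ^ 2 ≠ 0)]
  rw [le_div_iff₀ (by positivity), neg_div]
  calc u ^ (2 * α) * exp (-t) / s ^ p * u ^ 2 = 4 ^ p * t ^ p * exp (-t) := by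
        rw [← hrescale]; ring
    _ ≤ 4 ^ p * (p ^ p * exp t) * exp (-t) := by gcongr; exact rpow_le_mul_exp hp ht
    _ = (4 * p) ^ p := by rw [mul_rpow (by norm_num) hp.le, mul_assoc, mul_assoc, ← exp_add]; simp

theorem pow_mul_le_of_mul_le_succ {a : ℤ → ℝ} {ρ : ℝ} (hρ : 0 ≤ ρ)
    (hstep : ∀ j, ρ * a j ≤ a (j + 1)) (m : ℤ) (n : ℕ) : ρ ^ n * a m ≤ a (m + n) := by
  induction n with
  | zero => simp
  | succ n ih =>
    calc ρ ^ (n + 1) * a m = ρ * (ρ ^ n * a m) := by ring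
      _ ≤ ρ * a (m + n) := by gcongr
      _ ≤ a (m + (n + 1 : ℕ)) := by push_cast; rw [← add_assoc]; exact hstep _

theorem sum_Icc_one_div_sq_le_of_mul_le_succ {a : ℤ → ℝ} {ρ : ℝ} (hρ : 1 < ρ)
    (hstep : ∀ j, ρ * a j ≤ a (j + 1)) {m : ℤ} (hm : 0 < a m) (M : ℤ) :
    ∑ j ∈ Icc m M, 1 / a j ^ 2 ≤ ρ ^ 2 / (ρ ^ 2 - 1) / a m ^ 2 := by
  set r := (ρ ^ 2)⁻¹
  have hr0 : 0 ≤ r := by positivity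
  have hr1 : r < 1 := inv_lt_one_of_one_lt₀ (by nlinarith)
  have hterm : ∀ j ∈ Icc m M, 1 / a j ^ 2 ≤ r ^ (j - m).toNat / a m ^ 2 := by
    intro j hj
    have hj : j = m + (j - m).toNat := by rw [mem_Icc] at hj; omega
    have hgrowth := pow_mul_le_of_mul_le_succ (by linarith) hstep m (j - m).toNat
    rw [← hj] at hgrowth
    calc 1 / a j ^ 2 ≤ 1 / (ρ ^ (j - m).toNat * a m) ^ 2 := by gcongr
      _ = r ^ (j - m).toNat / a m ^ 2 := by
          rw [inv_pow, mul_pow, ← pow_mul, ← pow_mul, mul_comm 2]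
          field_simp
  have hinj : Set.InjOn (fun j : ℤ => (j - m).toNat) (Icc m M) := by
    intro i hi j hj h
    simp only [coe_Icc, Set.mem_Icc] at hi hj h
    omega
  calc ∑ j ∈ Icc m M, 1 / a j ^ 2 ≤ ∑ j ∈ Icc m M, r ^ (j - m).toNat / a m ^ 2 := sum_le_sum hterm
    _ = (∑ n ∈ (Icc m M).image (fun j => (j - m).toNat), r ^ n) / a m ^ 2 := by
        rw [sum_image hinj, sum_div]
    _ ≤ (∑' n : ℕ, r ^ n) / a m ^ 2 := by
        gcongr
        exact (summable_geometric_of_lt_one hr0 hr1).sum_le_tsum _ (fun n _ => by positivity)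
    _ = ρ ^ 2 / (ρ ^ 2 - 1) / a m ^ 2 := by
        rw [tsum_geometric_of_lt_one hr0 hr1]
        congr 1
        simp only [r]
        field_simp

theorem cotlar_lemma_i_general (α ρ V : ℝ) (hα : 0 < α) (hρ : 1 < ρ) (hV : 0 < V) :
    ∃ C > 0, ∀ (a : ℤ → ℝ) (v : ℤ → ℝ),
      (∀ j, 0 < a j) →
      (∀ j, ρ ≤ a (j + 1) / a j) → (∀ j, a (j + 1) / a j ≤ ρ ^ 2) →
      (∀ j, |v j| ≤ V) →
      ∀ (m M : ℤ), m ≤ M → ∀ s : ℝ, 0 < s →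
        |∑ j ∈ Finset.Icc m M,
            v j * ((a (j + 1) ^ (2 * α) * Real.exp (-(a (j + 1)) ^ 2 / (4 * s))
              - a j ^ (2 * α) * Real.exp (-(a j) ^ 2 / (4 * s))) / s ^ (1 + α))|
          ≤ C / (a m) ^ 2 := by
  set K := (4 * (1 + α)) ^ (1 + α)
  have hρ2 : 0 < ρ ^ 2 - 1 := by nlinarith
  refine ⟨V * K * (ρ ^ 2 / (ρ ^ 2 - 1)), by positivity, ?_⟩
  intro a v ha hlow _ hv m M _ s hs
  have hstep (j : ℤ) : ρ * a j ≤ a (j + 1) := (le_div_iff₀ (ha j)).mp (hlow j)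
  have hkernel (j : ℤ) := rpow_mul_exp_neg_sq_div_rpow_le (by linarith : -1 < α) (ha j) hs
  have hterm (j : ℤ) : |v j * ((a (j + 1) ^ (2 * α) * exp (-(a (j + 1)) ^ 2 / (4 * s))
      - a j ^ (2 * α) * exp (-(a j) ^ 2 / (4 * s))) / s ^ (1 + α))| ≤ V * K * (1 / a j ^ 2) := by
    have haj := ha j
    have haj1 := ha (j + 1)
    have hmono : K / a (j + 1) ^ 2 ≤ K / a j ^ 2 := by
      gcongr
      nlinarith [hstep j]
    rw [sub_div, abs_mul, mul_assoc, mul_one_div]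
    exact mul_le_mul (hv j) (abs_sub_le_of_nonneg_of_le (by positivity) ((hkernel _).trans hmono)
      (by positivity) (hkernel j)) (abs_nonneg _) hV.le
  calc _ ≤ ∑ j ∈ Icc m M, |v j * ((a (j + 1) ^ (2 * α) * exp (-(a (j + 1)) ^ 2 / (4 * s))
          - a j ^ (2 * α) * exp (-(a j) ^ 2 / (4 * s))) / s ^ (1 + α))| := abs_sum_le_sum_abs _ _
    _ ≤ ∑ j ∈ Icc m M, V * K * (1 / a j ^ 2) := sum_le_sum fun j _ => hterm j
    _ = V * K * ∑ j ∈ Icc m M, 1 / a j ^ 2 := (mul_sum _ _ _).symm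
    _ ≤ V * K * (ρ ^ 2 / (ρ ^ 2 - 1) / a m ^ 2) := by
        gcongr
        exact sum_Icc_one_div_sq_le_of_mul_le_succ hρ hstep (ha m) M
    _ = V * K * (ρ ^ 2 / (ρ ^ 2 - 1)) / a m ^ 2 := by ring

/-- Lemma (i) of the Cotlar-type estimate: for a `ρ`-lacunary sequence with
`ρ ≤ a_{j+1}/a_j ≤ ρ²` and `|v_j| ≤ V`,
`|∑_{j=m}^{M} v_j (a_{j+1}^{2α} e^{-a_{j+1}²/(4s)} - a_j^{2α} e^{-a_j²/(4s)})/s^{1+α}| ≤ C/a_m²`,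
with `C = C(ρ, V, α)`. -/
theorem cotlar_lemma_i (α ρ V : ℝ) (hα : 0 < α) (hα1 : α < 1) (hρ : 1 < ρ) (hV : 0 < V) :
    ∃ C > 0, ∀ (a : ℤ → ℝ) (v : ℤ → ℝ),
      (∀ j, 0 < a j) →
      (∀ j, ρ ≤ a (j + 1) / a j) → (∀ j, a (j + 1) / a j ≤ ρ ^ 2) →
      (∀ j, |v j| ≤ V) →
      ∀ (m M : ℤ), m ≤ M → ∀ s : ℝ, 0 < s →
        |∑ j ∈ Finset.Icc m M,
            v j * ((a (j + 1) ^ (2 * α) * Real.exp (-(a (j + 1)) ^ 2 / (4 * s))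
              - a j ^ (2 * α) * Real.exp (-(a j) ^ 2 / (4 * s))) / s ^ (1 + α))|
          ≤ C / (a m) ^ 2 :=
  cotlar_lemma_i_general α ρ V hα hρ hV
end

section
/- Let 0 < α < 1, ρ > 1, and let {a_j}_{j∈ℤ} be positive reals with ρ ≤ a_{j+1}/a_j ≤ ρ², and {v_j} with |v_j| ≤ V. Let c > 0, let k ≥ m be integers and t, s ∈ ℝ with t - s ≥ c a_k². Then for any M with -M ≤ m-1, |∑_{j=-M}^{m-1} v_j (a_{j+1}^{2α} e^{-a_{j+1}²/(4(t-s))} - a_j^{2α} e^{-a_j²/(4(t-s))}) / (t-s)^{1+α}| ≤ C a_k^{-2} ρ^{-2α(k-m+1)}, with C depending only on ρ, V, α, c. -/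
open Real Finset

/-!
Instead of the mean value theorem, a crude bound suffices: each increment
`a_{j+1}^{2α} e^{-a_{j+1}²/4τ} - a_j^{2α} e^{-a_j²/4τ}` is at most `a_{j+1}^{2α}` in absolute value,
and the lower ratio bound `ρ a_j ≤ a_{j+1}` makes `b_j = a_j^{2α}` grow geometrically with ratio
`r⁻¹ = ρ^{2α} > 1`. Hence the sum is `O(a_m^{2α} / τ^{1+α})`, and `a_m^{2α} ≤ r^{k-m} a_k^{2α}`
together with `τ^{1+α} ≥ c^{1+α} a_k^{2+2α}` gives the bound.
-/

lemma abs_rpow_mul_exp_sub_le {p τ x y : ℝ} (hp : 0 ≤ p) (hτ : 0 ≤ τ) (hx : 0 ≤ x) (hxy : x ≤ y) :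
    |y ^ p * exp (-y ^ 2 / (4 * τ)) - x ^ p * exp (-x ^ 2 / (4 * τ))| ≤ y ^ p := by
  have hexp : ∀ z : ℝ, exp (-z ^ 2 / (4 * τ)) ≤ 1 := fun z =>
    exp_le_one_iff.2 (div_nonpos_of_nonpos_of_nonneg (neg_nonpos.2 (sq_nonneg z)) (by positivity))
  have hy : 0 ≤ y := hx.trans hxy
  refine abs_sub_le_of_nonneg_of_le (by positivity)
    (mul_le_of_le_one_right (by positivity) (hexp y)) (by positivity) ?_
  exact (mul_le_of_le_one_right (by positivity) (hexp x)).trans (rpow_le_rpow hx hxy hp)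

lemma rpow_le_rpow_neg_mul_rpow {ρ x y p : ℝ} (hρ : 0 < ρ) (hx : 0 ≤ x) (hp : 0 ≤ p)
    (h : ρ * x ≤ y) : x ^ p ≤ ρ ^ (-p) * y ^ p := by
  calc x ^ p = ρ ^ (-p) * (ρ * x) ^ p := by
        rw [mul_rpow hρ.le hx, ← mul_assoc, ← rpow_add hρ, neg_add_cancel, rpow_zero, one_mul]
    _ ≤ ρ ^ (-p) * y ^ p := by gcongr

section GeometricGrowth

variable {b : ℤ → ℝ} {r : ℝ}

lemma le_zpow_sub_mul_of_le_mul_succ (hr : 0 < r) (hb : ∀ j, b j ≤ r * b (j + 1))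
    {i j : ℤ} (hij : i ≤ j) : b i ≤ r ^ (j - i) * b j := by
  induction j, hij using Int.leInduction with
  | base => simp
  | succ j _ ih =>
    calc b i ≤ r ^ (j - i) * (r * b (j + 1)) := ih.trans (by gcongr; exact hb j)
      _ = r ^ (j + 1 - i) * b (j + 1) := by
        rw [← mul_assoc, ← zpow_add_one₀ hr.ne']; ring_nf

lemma sum_Icc_le_div_one_sub_of_le_mul_succ (hr0 : 0 ≤ r) (hr : r < 1) (hb0 : ∀ j, 0 ≤ b j)
    (hb : ∀ j, b j ≤ r * b (j + 1)) (l m : ℤ) : ∑ j ∈ Icc l m, b j ≤ b m / (1 - r) := by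
  have h1r : 0 < 1 - r := sub_pos.2 hr
  rcases lt_or_ge m l with hml | hlm
  · rw [Icc_eq_empty_of_lt hml, sum_empty]
    exact div_nonneg (hb0 m) h1r.le
  induction m, hlm using Int.leInduction with
  | base =>
    rw [Icc_self, sum_singleton, le_div_iff₀ h1r]
    nlinarith [hb0 l]
  | succ m _ ih =>
    rw [← insert_Icc_right_eq_Icc_add_one (by omega), sum_insert (by simp),
      le_div_iff₀ h1r]
    have := (le_div_iff₀ h1r).1 ih
    nlinarith [hb m, hb0 (m + 1)]

lemma abs_sum_mul_div_le_of_le_mul_succ {v d : ℤ → ℝ} {V T : ℝ} (hT : 0 < T) (hr0 : 0 ≤ r)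
    (hr : r < 1) (hb0 : ∀ j, 0 ≤ b j) (hb : ∀ j, b j ≤ r * b (j + 1)) (hv : ∀ j, |v j| ≤ V)
    (hd : ∀ j, |d j| ≤ b j) (l m : ℤ) :
    |∑ j ∈ Icc l m, v j * (d j / T)| ≤ V * b m / ((1 - r) * T) := by
  have hV : 0 ≤ V := (abs_nonneg _).trans (hv 0)
  calc |∑ j ∈ Icc l m, v j * (d j / T)| ≤ ∑ j ∈ Icc l m, V * b j / T := by
        refine (abs_sum_le_sum_abs _ _).trans (sum_le_sum fun j _ => ?_)
        rw [abs_mul, abs_div, abs_of_pos hT, ← mul_div_assoc]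
        gcongr
        exacts [hv j, hd j]
    _ = V * (∑ j ∈ Icc l m, b j) / T := by rw [← sum_div, ← mul_sum]
    _ ≤ V * (b m / (1 - r)) / T := by
        gcongr
        exact sum_Icc_le_div_one_sub_of_le_mul_succ hr0 hr hb0 hb l m
    _ = V * b m / ((1 - r) * T) := by rw [← mul_div_assoc, div_div]

end GeometricGrowth

lemma mul_sq_rpow_one_add {c x α : ℝ} (hc : 0 ≤ c) (hx : 0 < x) :
    (c * x ^ 2) ^ (1 + α) = c ^ (1 + α) * (x ^ 2 * x ^ (2 * α)) := by
  rw [mul_rpow hc (by positivity), ← rpow_natCast, ← rpow_mul hx.le, ← rpow_add hx]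
  norm_num [mul_add]

theorem cotlar_lemma_ii_general (α ρ V c : ℝ) (hα : 0 < α) (hρ : 1 < ρ)
    (hV : 0 < V) (hc : 0 < c) :
    ∃ C > 0, ∀ (a : ℤ → ℝ) (v : ℤ → ℝ),
      (∀ j, 0 < a j) →
      (∀ j, ρ ≤ a (j + 1) / a j) → (∀ j, a (j + 1) / a j ≤ ρ ^ 2) →
      (∀ j, |v j| ≤ V) →
      ∀ (m k M : ℤ), m ≤ k → -M ≤ m - 1 →
      ∀ t s : ℝ, c * (a k) ^ 2 ≤ t - s →
        |∑ j ∈ Finset.Icc (-M) (m - 1),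
            v j * ((a (j + 1) ^ (2 * α) * Real.exp (-(a (j + 1)) ^ 2 / (4 * (t - s)))
              - a j ^ (2 * α) * Real.exp (-(a j) ^ 2 / (4 * (t - s)))) / (t - s) ^ (1 + α))|
          ≤ C * (a k) ^ (-2 : ℝ) * ρ ^ (-2 * α * (k - m + 1 : ℝ)) := by
  set r := ρ ^ (-(2 * α))
  have hr0 : 0 < r := rpow_pos_of_pos (by linarith) _
  have h1r : 0 < 1 - r := sub_pos.2 (rpow_lt_one_of_one_lt_of_neg hρ (by linarith))
  refine ⟨V / ((1 - r) * c ^ (1 + α) * r), by positivity, ?_⟩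
  intro a v ha hlo _ hv m k M hmk _ t s hts
  set b : ℤ → ℝ := fun j => a j ^ (2 * α)
  have hstep : ∀ j, ρ * a j ≤ a (j + 1) := fun j => (le_div_iff₀ (ha j)).1 (hlo j)
  have hb : ∀ j, b j ≤ r * b (j + 1) := fun j =>
    rpow_le_rpow_neg_mul_rpow (by linarith) (ha j).le (by linarith) (hstep j)
  have hak : 0 < a k := ha k
  have hbk : 0 < b k := rpow_pos_of_pos hak _
  have hτ0 : 0 < t - s := (by positivity : 0 < c * a k ^ 2).trans_le hts
  have hincr : ∀ j, |a (j + 1) ^ (2 * α) * exp (-(a (j + 1)) ^ 2 / (4 * (t - s)))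
      - a j ^ (2 * α) * exp (-(a j) ^ 2 / (4 * (t - s)))| ≤ b (j + 1) := fun j =>
    abs_rpow_mul_exp_sub_le (by linarith) hτ0.le (ha j).le (by nlinarith [ha j, hstep j])
  have hsum := abs_sum_mul_div_le_of_le_mul_succ (rpow_pos_of_pos hτ0 (1 + α)) hr0.le
    (by linarith) (fun j => (rpow_pos_of_pos (ha (j + 1)) _).le) (fun j => hb (j + 1)) hv hincr
    (-M) (m - 1)
  have hρpow : ρ ^ (-2 * α * (k - m + 1 : ℝ)) = r ^ (k - m + 1) := by
    rw [← rpow_intCast, ← rpow_mul (by linarith)]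
    push_cast; ring_nf
  calc _ ≤ V * b m / ((1 - r) * (t - s) ^ (1 + α)) := by rwa [sub_add_cancel] at hsum
    _ ≤ V * (r ^ (k - m) * b k) / ((1 - r) * (c ^ (1 + α) * (a k ^ 2 * b k))) := by
        gcongr
        · exact le_zpow_sub_mul_of_le_mul_succ hr0 hb hmk
        · exact mul_sq_rpow_one_add hc.le hak ▸ rpow_le_rpow (by positivity) hts (by linarith)
    _ = _ := by
        rw [hρpow, rpow_neg hak.le, rpow_two, zpow_add_one₀ hr0.ne']
        field_simp

/-- Lemma (ii) of the Cotlar-type estimate: with `t - s ≥ c a_k²` and `k ≥ m`,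
`|∑_{j=-M}^{m-1} v_j (a_{j+1}^{2α} e^{-a_{j+1}²/(4(t-s))} - a_j^{2α} e^{-a_j²/(4(t-s))})/(t-s)^{1+α}|
  ≤ C a_k^{-2} ρ^{-2α(k-m+1)}` with `C = C(ρ, V, α, c)`. -/
theorem cotlar_lemma_ii (α ρ V c : ℝ) (hα : 0 < α) (hα1 : α < 1) (hρ : 1 < ρ)
    (hV : 0 < V) (hc : 0 < c) :
    ∃ C > 0, ∀ (a : ℤ → ℝ) (v : ℤ → ℝ),
      (∀ j, 0 < a j) →
      (∀ j, ρ ≤ a (j + 1) / a j) → (∀ j, a (j + 1) / a j ≤ ρ ^ 2) →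
      (∀ j, |v j| ≤ V) →
      ∀ (m k M : ℤ), m ≤ k → -M ≤ m - 1 →
      ∀ t s : ℝ, c * (a k) ^ 2 ≤ t - s →
        |∑ j ∈ Finset.Icc (-M) (m - 1),
            v j * ((a (j + 1) ^ (2 * α) * Real.exp (-(a (j + 1)) ^ 2 / (4 * (t - s)))
              - a j ^ (2 * α) * Real.exp (-(a j) ^ 2 / (4 * (t - s)))) / (t - s) ^ (1 + α))|
          ≤ C * (a k) ^ (-2 : ℝ) * ρ ^ (-2 * α * (k - m + 1 : ℝ)) :=
  cotlar_lemma_ii_general α ρ V c hα hρ hV hc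
end

section
/- Let 0 < α < 1 and n ≥ 1. For s > 0 and y ∈ ℝⁿ define W_α(y,s) = e^{-|y|²/(4s)} / ((4π s)^{n/2} s^{1+α}) · s^α. Then ∑_{j∈ℤ} |a_{j+1}^{2α} e^{-a_{j+1}²/(4s)} - a_j^{2α} e^{-a_j²/(4s)}| · e^{-|y|²/(4s)} / ((4πs)^{n/2} s^{1+α}) ≤ C e^{-|y|²/(4s)} / s^{n/2+1} ≤ C' / (s^{1/2}+|y|)^{n+2}, for any increasing positive sequence {a_j}_{j∈ℤ} with a_j → 0 as j→-∞ and a_j → ∞ as j→∞. -/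
open Real Set Filter

/-! The profile `u ↦ u^{2α} e^{-u²/(4s)}` increases up to `u = √(4αs)` and decreases afterwards,
so along any increasing sequence its total variation is at most twice its peak value
`(4α)^α e^{-α} s^α`; multiplying by the heat kernel factor gives `C e^{-|y|²/(4s)}/s^{n/2+1}`.
For the second bound, `|y|²/(4s) ≥ t - 2` with `t = (√s + |y|)/√s`, and `t^N e^{-t} ≤ N!`. -/

theorem Monotone.sum_sub_le_sub {G : ℤ → ℝ} (hG : Monotone G) {L : ℝ} (hL : ∀ j, L ≤ G j)
    (T : Finset ℤ) {b : ℤ} (hb : ∀ j ∈ T, j < b) :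
    ∑ j ∈ T, (G (j + 1) - G j) ≤ G b - L := by
  induction T using Finset.induction_on_max generalizing b with
  | empty => simpa using hL b
  | insert x S hS ih =>
    rw [Finset.sum_insert fun hx => (hS x hx).false]
    have hS_sum := ih hS
    have hx_b : G (x + 1) ≤ G b := hG (hb x (Finset.mem_insert_self x S))
    linarith

theorem Monotone.sum_sub_le {G : ℤ → ℝ} (hG : Monotone G) {L U : ℝ} (hL : ∀ j, L ≤ G j)
    (hU : ∀ j, G j ≤ U) (T : Finset ℤ) : ∑ j ∈ T, (G (j + 1) - G j) ≤ U - L := by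
  obtain ⟨b, hb⟩ := T.bddAbove
  calc ∑ j ∈ T, (G (j + 1) - G j) ≤ G (b + 1) - L :=
        hG.sum_sub_le_sub hL T fun j hj => Int.lt_add_one_iff.2 (hb hj)
    _ ≤ U - L := by linarith [hU (b + 1)]

/-- `f ∘ a = f (min a m) + f (max a m) - f m` splits `f ∘ a` into a nondecreasing and a
nonincreasing part, each ranging in `[0, f m]`. -/
theorem sum_abs_sub_comp_le_of_unimodal {β : Type*} [LinearOrder β] {f : β → ℝ} {D : Set β}
    {m : β} (hm : m ∈ D) (hf_mono : MonotoneOn f (D ∩ Iic m))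
    (hf_anti : AntitoneOn f (D ∩ Ici m)) (hf_nonneg : ∀ x ∈ D, 0 ≤ f x) {a : ℤ → β}
    (ha : Monotone a) (haD : ∀ j, a j ∈ D) (T : Finset ℤ) :
    ∑ j ∈ T, |f (a (j + 1)) - f (a j)| ≤ 2 * f m := by
  have hmin : ∀ j, min (a j) m ∈ D ∩ Iic m := fun j =>
    ⟨by rcases min_choice (a j) m with h | h <;> simp only [h, haD, hm], min_le_right _ _⟩
  have hmax : ∀ j, max (a j) m ∈ D ∩ Ici m := fun j =>
    ⟨by rcases max_choice (a j) m with h | h <;> simp only [h, haD, hm], le_max_right _ _⟩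
  set g : ℤ → ℝ := fun j => f (min (a j) m)
  set h : ℤ → ℝ := fun j => -f (max (a j) m)
  have hg : Monotone g := fun i j hij =>
    hf_mono (hmin i) (hmin j) (min_le_min_right m (ha hij))
  have hh : Monotone h := fun i j hij =>
    neg_le_neg (hf_anti (hmax i) (hmax j) (max_le_max_right m (ha hij)))
  have hfa : ∀ j, f (a j) = g j - h j - f m := fun j => by
    rcases le_total (a j) m with hj | hj
    · simp only [g, h, min_eq_left hj, max_eq_right hj]; ring
    · simp only [g, h, min_eq_right hj, max_eq_left hj]; ring
  have hstep : ∀ j, |f (a (j + 1)) - f (a j)| ≤ (g (j + 1) - g j) + (h (j + 1) - h j) :=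
    fun j => by
      rw [hfa, hfa, abs_le]
      have := hg (Int.le_add_one le_rfl : j ≤ j + 1)
      have := hh (Int.le_add_one le_rfl : j ≤ j + 1)
      constructor <;> linarith
  have hg_sum := hg.sum_sub_le (fun j => hf_nonneg _ (hmin j).1)
    (fun j => hf_mono (hmin j) ⟨hm, le_rfl⟩ (hmin j).2) T
  have hh_sum := hh.sum_sub_le (fun j => neg_le_neg (hf_anti ⟨hm, le_rfl⟩ (hmax j) (hmax j).2))
    (fun j => neg_nonpos.2 (hf_nonneg _ (hmax j).1)) T
  calc ∑ j ∈ T, |f (a (j + 1)) - f (a j)|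
      ≤ ∑ j ∈ T, ((g (j + 1) - g j) + (h (j + 1) - h j)) := Finset.sum_le_sum fun j _ => hstep j
    _ ≤ 2 * f m := by rw [Finset.sum_add_distrib]; linarith

noncomputable def powGaussian (α s u : ℝ) : ℝ := u ^ (2 * α) * exp (-u ^ 2 / (4 * s))

section powGaussian

variable {α s u : ℝ}

theorem powGaussian_nonneg (hu : 0 ≤ u) : 0 ≤ powGaussian α s u := by
  unfold powGaussian; positivity

theorem hasDerivAt_powGaussian (hu : 0 < u) :
    HasDerivAt (powGaussian α s)
      (u ^ (2 * α - 1) * exp (-u ^ 2 / (4 * s)) * (2 * α - u ^ 2 / (2 * s))) u := by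
  have hpow : HasDerivAt (fun u : ℝ => u ^ (2 * α)) (2 * α * u ^ (2 * α - 1)) u :=
    hasDerivAt_rpow_const (Or.inl hu.ne')
  have hexp : HasDerivAt (fun u : ℝ => exp (-u ^ 2 / (4 * s)))
      (exp (-u ^ 2 / (4 * s)) * (-(2 * u) / (4 * s))) u := by
    simpa using (((hasDerivAt_pow 2 u).neg).div_const (4 * s)).exp
  refine (hpow.mul hexp).congr_deriv ?_
  rw [show u ^ (2 * α) = u ^ (2 * α - 1) * u by rw [← rpow_add_one hu.ne']; ring_nf]
  field_simp
  ring

theorem continuousOn_powGaussian : ContinuousOn (powGaussian α s) (Ioi 0) := fun _ hu =>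
  (hasDerivAt_powGaussian hu).continuousAt.continuousWithinAt

theorem monotoneOn_powGaussian (hα : 0 ≤ α) (hs : 0 < s) :
    MonotoneOn (powGaussian α s) (Ioi 0 ∩ Iic √(4 * α * s)) := by
  have hD : Ioi 0 ∩ Iic √(4 * α * s) ⊆ Ioi 0 := inter_subset_left
  refine monotoneOn_of_hasDerivWithinAt_nonneg ((convex_Ioi 0).inter (convex_Iic _))
    (continuousOn_powGaussian.mono hD)
    (fun u hu => (hasDerivAt_powGaussian (hD (interior_subset hu))).hasDerivWithinAt)
    fun u hu => ?_
  obtain ⟨hu0 : 0 < u, hum⟩ := interior_subset hu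
  have hu2 : u ^ 2 ≤ 4 * α * s := (le_sqrt hu0.le (by positivity)).1 hum
  have hsign : 0 ≤ 2 * α - u ^ 2 / (2 * s) := by
    rw [sub_nonneg, div_le_iff₀ (by positivity)]; linarith
  positivity

theorem antitoneOn_powGaussian (hs : 0 < s) :
    AntitoneOn (powGaussian α s) (Ioi 0 ∩ Ici √(4 * α * s)) := by
  have hD : Ioi 0 ∩ Ici √(4 * α * s) ⊆ Ioi 0 := inter_subset_left
  refine antitoneOn_of_hasDerivWithinAt_nonpos ((convex_Ioi 0).inter (convex_Ici _))
    (continuousOn_powGaussian.mono hD)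
    (fun u hu => (hasDerivAt_powGaussian (hD (interior_subset hu))).hasDerivWithinAt)
    fun u hu => ?_
  obtain ⟨hu0 : 0 < u, hum⟩ := interior_subset hu
  have hu2 : 4 * α * s ≤ u ^ 2 := (sqrt_le_left hu0.le).1 hum
  have hsign : 2 * α - u ^ 2 / (2 * s) ≤ 0 := by
    rw [sub_nonpos, le_div_iff₀ (by positivity)]; linarith
  exact mul_nonpos_of_nonneg_of_nonpos (by positivity) hsign

theorem powGaussian_sqrt (hα : 0 ≤ α) (hs : 0 < s) :
    powGaussian α s √(4 * α * s) = (4 * α) ^ α * exp (-α) * s ^ α := by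
  have hsq : √(4 * α * s) ^ 2 = 4 * α * s := sq_sqrt (by positivity)
  have hpow : √(4 * α * s) ^ (2 * α) = (4 * α * s) ^ α := by
    rw [rpow_mul (sqrt_nonneg _), rpow_two, hsq]
  rw [powGaussian, hpow, hsq, mul_rpow (by positivity) hs.le,
    show -(4 * α * s) / (4 * s) = -α by field_simp]
  ring

theorem sum_abs_sub_powGaussian_le (hα : 0 < α) (hs : 0 < s) {a : ℤ → ℝ}
    (ha_pos : ∀ j, 0 < a j) (ha : Monotone a) (T : Finset ℤ) :
    ∑ j ∈ T, |powGaussian α s (a (j + 1)) - powGaussian α s (a j)|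
      ≤ 2 * ((4 * α) ^ α * exp (-α) * s ^ α) := by
  rw [← powGaussian_sqrt hα.le hs]
  exact sum_abs_sub_comp_le_of_unimodal (sqrt_pos.2 (by positivity))
    (monotoneOn_powGaussian hα.le hs) (antitoneOn_powGaussian hs)
    (fun _ hx => powGaussian_nonneg (le_of_lt hx)) ha ha_pos T

end powGaussian

theorem pow_mul_exp_neg_le_factorial {x : ℝ} (hx : 0 ≤ x) (N : ℕ) :
    x ^ N * exp (-x) ≤ N.factorial := by
  have h := Real.pow_div_factorial_le_exp (x := x) hx N
  rw [div_le_iff₀ (by positivity)] at h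
  calc x ^ N * exp (-x) ≤ exp x * N.factorial * exp (-x) := by gcongr
    _ = N.factorial := by rw [mul_right_comm, ← exp_add, add_neg_cancel, exp_zero, one_mul]

theorem exp_neg_sq_div_mul_rpow_le {s r : ℝ} (hs : 0 < s) (hr : 0 ≤ r) (N : ℕ) :
    exp (-r ^ 2 / (4 * s)) * (√s + r) ^ (N : ℝ) ≤ exp 2 * N.factorial * s ^ ((N : ℝ) / 2) := by
  set q := √s
  have hq : 0 < q := sqrt_pos.2 hs
  set t := (q + r) / q
  have ht : 0 ≤ t := by positivity
  have hexp : -r ^ 2 / (4 * s) ≤ 2 - t := by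
    have hsq : (r / (2 * q) - 1) ^ 2 = r ^ 2 / (4 * s) - t + 2 := by
      have hs' : s = q ^ 2 := (sq_sqrt hs.le).symm
      rw [hs']; simp only [t]; field_simp; ring
    rw [neg_div]
    linarith [sq_nonneg (r / (2 * q) - 1)]
  calc exp (-r ^ 2 / (4 * s)) * (q + r) ^ (N : ℝ)
      = exp (-r ^ 2 / (4 * s)) * (t ^ N * q ^ N) := by
        rw [rpow_natCast, ← mul_pow, div_mul_cancel₀ _ hq.ne']
    _ ≤ exp (2 - t) * (t ^ N * q ^ N) := by gcongr
    _ = exp 2 * (t ^ N * exp (-t)) * q ^ N := by rw [sub_eq_add_neg, exp_add]; ring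
    _ ≤ exp 2 * N.factorial * q ^ N := by gcongr; exact pow_mul_exp_neg_le_factorial ht N
    _ = exp 2 * N.factorial * s ^ ((N : ℝ) / 2) := by rw [rpow_div_two_eq_sqrt _ hs.le, rpow_natCast]

theorem kernel_size_estimate_general (n : ℕ) (α : ℝ) (hα : 0 < α) :
    ∃ C > 0, ∃ C' > 0, ∀ (a : ℤ → ℝ), (∀ j, 0 < a j) → StrictMono a →
      Tendsto a atBot (nhds 0) → Tendsto a atTop atTop →
      ∀ (s : ℝ), 0 < s → ∀ (y : EuclideanSpace ℝ (Fin n)),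
      (∑' j : ℤ,
          |a (j + 1) ^ (2 * α) * Real.exp (-(a (j + 1)) ^ 2 / (4 * s))
            - a j ^ (2 * α) * Real.exp (-(a j) ^ 2 / (4 * s))| *
          (Real.exp (-‖y‖ ^ 2 / (4 * s)) / ((4 * Real.pi * s) ^ ((n : ℝ) / 2) * s ^ (1 + α))))
        ≤ C * Real.exp (-‖y‖ ^ 2 / (4 * s)) / s ^ ((n : ℝ) / 2 + 1) ∧
      C * Real.exp (-‖y‖ ^ 2 / (4 * s)) / s ^ ((n : ℝ) / 2 + 1)
        ≤ C' / (Real.sqrt s + ‖y‖) ^ ((n : ℝ) + 2) := by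
  set C := 2 * ((4 * α) ^ α * exp (-α)) / (4 * π) ^ ((n : ℝ) / 2)
  refine ⟨C, by positivity, C * (exp 2 * (n + 2).factorial), by positivity, ?_⟩
  intro a ha_pos ha_mono _ _ s hs y
  set E := exp (-‖y‖ ^ 2 / (4 * s))
  constructor
  · have hTV := Real.tsum_le_of_sum_le (fun _ => abs_nonneg _)
      (sum_abs_sub_powGaussian_le hα hs ha_pos ha_mono.monotone)
    rw [tsum_mul_right]
    calc _ ≤ 2 * ((4 * α) ^ α * exp (-α) * s ^ α) *
          (E / ((4 * π * s) ^ ((n : ℝ) / 2) * s ^ (1 + α))) := by gcongr; exact hTV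
      _ = C * E / s ^ ((n : ℝ) / 2 + 1) := by
        rw [mul_rpow (by positivity) hs.le, rpow_add hs, rpow_add_one hs.ne', rpow_one]
        simp only [C]
        field_simp
  · have hgauss := exp_neg_sq_div_mul_rpow_le hs (norm_nonneg y) (n + 2)
    push_cast at hgauss
    rw [show (n : ℝ) / 2 + 1 = ((n : ℝ) + 2) / 2 by ring,
      div_le_div_iff₀ (by positivity) (by positivity)]
    calc C * E * (√s + ‖y‖) ^ ((n : ℝ) + 2) = C * (E * (√s + ‖y‖) ^ ((n : ℝ) + 2)) := by ring
      _ ≤ C * (exp 2 * (n + 2).factorial * s ^ (((n : ℝ) + 2) / 2)) := by gcongr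
      _ = C * (exp 2 * (n + 2).factorial) * s ^ (((n : ℝ) + 2) / 2) := by ring

/-- Kernel size estimate: for an increasing positive sequence `a_j` with `a_j → 0` as
`j → -∞` and `a_j → ∞` as `j → ∞`, the total variation sum of the subordinated kernels is
bounded by `C e^{-|y|²/(4s)}/s^{n/2+1}`, which in turn is bounded by
`C'/(√s + |y|)^{n+2}`. -/
theorem kernel_size_estimate (n : ℕ) (hn : 1 ≤ n) (α : ℝ) (hα : 0 < α) (hα1 : α < 1) :
    ∃ C > 0, ∃ C' > 0, ∀ (a : ℤ → ℝ), (∀ j, 0 < a j) → StrictMono a →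
      Tendsto a atBot (nhds 0) → Tendsto a atTop atTop →
      ∀ (s : ℝ), 0 < s → ∀ (y : EuclideanSpace ℝ (Fin n)),
      (∑' j : ℤ,
          |a (j + 1) ^ (2 * α) * Real.exp (-(a (j + 1)) ^ 2 / (4 * s))
            - a j ^ (2 * α) * Real.exp (-(a j) ^ 2 / (4 * s))| *
          (Real.exp (-‖y‖ ^ 2 / (4 * s)) / ((4 * Real.pi * s) ^ ((n : ℝ) / 2) * s ^ (1 + α))))
        ≤ C * Real.exp (-‖y‖ ^ 2 / (4 * s)) / s ^ ((n : ℝ) / 2 + 1) ∧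
      C * Real.exp (-‖y‖ ^ 2 / (4 * s)) / s ^ ((n : ℝ) / 2 + 1)
        ≤ C' / (Real.sqrt s + ‖y‖) ^ ((n : ℝ) + 2) :=
  kernel_size_estimate_general n α hα
end
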